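/- arXiv:2110.14859 — 5 statements merged into one kernel-verified Lean document; each statement's English description precedes it below -/
import Mathlib

section
/- Let g : [0,k] → ℝ≥0 be a nondecreasing concave function with g(1) > 0, and for y ∈ [1,k] let L_y be a supporting (tangent) line of g at y with nonnegative slope. Then for every z ∈ [y,k], L_y(z) ≤ (z/y)·g(z). In particular L_y provides a (1+ε)-approximation of g on [y, (1+ε)y] ∩ [1,k]. -/
/-!
As `B ≥ 0` and `z / y ≥ 1`, `M z + B ≤ (z / y) (M y + B) = (z / y) g(y) ≤ (z / y) g(z)` by
monotonicity; for `z ≤ (1 + ε) y` the factor `z / y` is at most `1 + ε`.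
-/

lemma affine_le_div_mul_of_le {M B y z : ℝ} (hB : 0 ≤ B) (hy : 0 < y)
    (hyz : y ≤ z) : M * z + B ≤ z / y * (M * y + B) := by
  have hzy : 1 ≤ z / y := (one_le_div hy).2 hyz
  calc M * z + B ≤ M * z + z / y * B := by gcongr; exact le_mul_of_one_le_left hB hzy
    _ = z / y * (M * y + B) := by field_simp

lemma affine_le_div_mul_of_monotoneOn {s : Set ℝ} {g : ℝ → ℝ} (hmono : MonotoneOn g s)
    {M B y z : ℝ} (hB : 0 ≤ B) (hy : 0 < y) (hys : y ∈ s) (hzs : z ∈ s)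
    (hyz : y ≤ z) (htan : M * y + B = g y) : M * z + B ≤ z / y * g z :=
  calc M * z + B ≤ z / y * g y := htan ▸ affine_le_div_mul_of_le hB hy hyz
    _ ≤ z / y * g z := mul_le_mul_of_nonneg_left (hmono hys hzs hyz)
      (div_nonneg (hy.le.trans hyz) hy.le)

theorem stmt4_general (k y M B ε : ℝ) (g : ℝ → ℝ)
    (hnn : ∀ x ∈ Set.Icc (0:ℝ) k, 0 ≤ g x)
    (hmono : MonotoneOn g (Set.Icc 0 k))
    (hy : y ∈ Set.Icc (1:ℝ) k)
    (hB : 0 ≤ B)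
    (htan : M * y + B = g y) :
    (∀ z ∈ Set.Icc y k, M * z + B ≤ (z / y) * g z) ∧
    (∀ z ∈ Set.Icc y ((1 + ε) * y) ∩ Set.Icc 1 k, M * z + B ≤ (1 + ε) * g z) := by
  obtain ⟨hy1, hyk⟩ := hy
  have hy0 : 0 < y := one_pos.trans_le hy1
  have hL : ∀ z ∈ Set.Icc y k, M * z + B ≤ (z / y) * g z := fun z ⟨hyz, hzk⟩ =>
    affine_le_div_mul_of_monotoneOn hmono hB hy0 ⟨hy0.le, hyk⟩
      ⟨hy0.le.trans hyz, hzk⟩ hyz htan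
  refine ⟨hL, fun z ⟨⟨hyz, hzε⟩, _, hzk⟩ => ?_⟩
  calc M * z + B ≤ (z / y) * g z := hL z ⟨hyz, hzk⟩
    _ ≤ (1 + ε) * g z := by
      gcongr
      · exact hnn z ⟨hy0.le.trans hyz, hzk⟩
      · exact (div_le_iff₀ hy0).2 hzε

theorem stmt4 (k y M B ε : ℝ) (hk : 1 ≤ k) (g : ℝ → ℝ)
    (hconc : ConcaveOn ℝ (Set.Icc 0 k) g)
    (hnn : ∀ x ∈ Set.Icc (0:ℝ) k, 0 ≤ g x)
    (hmono : MonotoneOn g (Set.Icc 0 k))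
    (hg1 : 0 < g 1)
    (hy : y ∈ Set.Icc (1:ℝ) k)
    (hM : 0 ≤ M) (hB : 0 ≤ B)
    (htan : M * y + B = g y)
    (hup : ∀ x ∈ Set.Icc (0:ℝ) k, g x ≤ M * x + B)
    (hε : 0 ≤ ε) :
    (∀ z ∈ Set.Icc y k, M * z + B ≤ (z / y) * g z) ∧
    (∀ z ∈ Set.Icc y ((1 + ε) * y) ∩ Set.Icc 1 k, M * z + B ≤ (1 + ε) * g z) :=
  stmt4_general k y M B ε g hnn hmono hy hB htan
end

section
/- With notation as above (g(x) = x(k−x), ε < 1, z ∈ [1,k/2], t = z + √(z(k−z)ε), and z' the larger root of g_t(z') = (1+ε)g(z')), we have z' − z > kε/(1+ε). -/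
/-! Multiplying by `1 + ε`, the claim becomes `(√(z(k-z)ε) - εz) + (√(k²ε² + 4εt(k-t)) - kε)/2 > 0`.
The first bracket is positive because `εz < z ≤ k - z`, and the second is nonnegative because
`0 ≤ t ≤ k`, the upper bound coming from `√(z(k-z)ε) ≤ k - z`. -/

lemma mul_lt_sqrt_mul_sub_mul {k ε z : ℝ} (hz : 0 < z) (hε : 0 < ε) (h : ε * z < k - z) :
    ε * z < √(z * (k - z) * ε) := by
  rw [Real.lt_sqrt (by positivity)]
  nlinarith [mul_lt_mul_of_pos_left h (mul_pos hε hz)]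

lemma sqrt_mul_sub_mul_le_sub {k ε z : ℝ} (hz : 0 ≤ z) (hε : ε ≤ 1) (h : z ≤ k - z) :
    √(z * (k - z) * ε) ≤ k - z := by
  have hkz : 0 ≤ k - z := hz.trans h
  rw [Real.sqrt_le_left hkz]
  calc z * (k - z) * ε ≤ z * (k - z) := mul_le_of_le_one_right (by positivity) hε
    _ ≤ (k - z) ^ 2 := by nlinarith

lemma mul_le_sqrt_sq_add_mul_sub {k ε t : ℝ} (hε : 0 ≤ ε) (ht0 : 0 ≤ t) (htk : t ≤ k) :
    k * ε ≤ √(k ^ 2 * ε ^ 2 + 4 * ε * t * (k - t)) := by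
  have : 0 ≤ 4 * ε * t * (k - t) := by have := sub_nonneg.2 htk; positivity
  exact Real.le_sqrt_of_sq_le (by nlinarith)

theorem stmt9_general (k ε z t z' : ℝ) (hε0 : 0 < ε) (hε1 : ε < 1)
    (hz : z ∈ Set.Icc 1 (k / 2))
    (ht : t = z + Real.sqrt (z * (k - z) * ε))
    (hz' : z' = t / (1 + ε) + k * ε / (2 * (1 + ε))
      + (1 / (2 * (1 + ε))) * Real.sqrt (k ^ 2 * ε ^ 2 + 4 * ε * t * (k - t))) :
    z' - z > k * ε / (1 + ε) := by
  obtain ⟨hz1, hzk⟩ := hz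
  have hzkz : z ≤ k - z := by linarith
  have hs1 : ε * z < √(z * (k - z) * ε) :=
    mul_lt_sqrt_mul_sub_mul (by linarith) hε0 (by nlinarith)
  have hs1k : √(z * (k - z) * ε) ≤ k - z := sqrt_mul_sub_mul_le_sub (by linarith) hε1.le hzkz
  have ht0 : 0 ≤ t := by linarith [Real.sqrt_nonneg (z * (k - z) * ε)]
  have hs2 : k * ε ≤ √(k ^ 2 * ε ^ 2 + 4 * ε * t * (k - t)) :=
    mul_le_sqrt_sq_add_mul_sub hε0.le ht0 (by linarith)
  rw [gt_iff_lt, div_lt_iff₀ (by linarith), hz']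
  generalize √(k ^ 2 * ε ^ 2 + 4 * ε * t * (k - t)) = s at hs2
  field_simp
  linarith

theorem stmt9 (k ε z t z' : ℝ) (hk : 0 < k) (hε0 : 0 < ε) (hε1 : ε < 1)
    (hz : z ∈ Set.Icc 1 (k / 2))
    (ht : t = z + Real.sqrt (z * (k - z) * ε))
    (hz' : z' = t / (1 + ε) + k * ε / (2 * (1 + ε))
      + (1 / (2 * (1 + ε))) * Real.sqrt (k ^ 2 * ε ^ 2 + 4 * ε * t * (k - t))) :
    z' - z > k * ε / (1 + ε) :=
  stmt9_general k ε z t z' hε0 hε1 hz ht hz'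
end

section
/- With the same setup, z' − z > (√2/2)·(√(kε)/(1+ε))·√z; i.e., each greedy step covering the interval from z advances by at least (√2/2)·√(kεz)/(1+ε), provided z ≤ k/2. -/
/-!
Write `s = √(z(k-z)ε)`, so `t = z + s`. Then `2(1+ε)(z' - z) = 2(s + ε(k/2 - z)) + √R` with
`R = k²ε² + 4εt(k-t)`. The first summand is positive since `z ≤ k/2`, and `s² = z(k-z)ε` makes
`R - 2kεz` a sum of nonnegative multiples of `k - 2z`, so `√R ≥ √(2kεz)`.
-/

open Real

lemma two_mul_mul_le_radicand {k ε z : ℝ} (hz : 0 ≤ z) (hzk : 2 * z ≤ k) (hε : 0 ≤ ε) :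
    2 * (k * ε) * z ≤ k ^ 2 * ε ^ 2 + 4 * ε * (z + √(z * (k - z) * ε))
      * (k - (z + √(z * (k - z) * ε))) := by
  set s := √(z * (k - z) * ε)
  have hs : 0 ≤ s := sqrt_nonneg _
  have hkz : 0 ≤ k - z := by linarith
  have hs2 : s ^ 2 = z * (k - z) * ε := sq_sqrt (by positivity)
  have hgap : 0 ≤ k - 2 * z := by linarith
  have key : 0 ≤ ε * (k - 2 * z) ^ 2 + 2 * z * (k - 2 * z) + 4 * s * (k - 2 * z) := by positivity
  linear_combination ε * key + (4 * ε) * hs2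

lemma sqrt_two_mul_le_sqrt_radicand {k ε z : ℝ} (hz : 0 ≤ z) (hzk : 2 * z ≤ k) (hε : 0 ≤ ε) :
    √2 * √(k * ε) * √z ≤ √(k ^ 2 * ε ^ 2 + 4 * ε * (z + √(z * (k - z) * ε))
      * (k - (z + √(z * (k - z) * ε)))) := by
  have hk : 0 ≤ k := by linarith
  rw [← sqrt_mul zero_le_two, ← sqrt_mul (by positivity)]
  exact sqrt_le_sqrt (two_mul_mul_le_radicand hz hzk hε)

lemma mul_one_add_lt_add_sqrt {k ε z : ℝ} (hz : 0 < z) (hzk : 2 * z ≤ k) (hε : 0 < ε) :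
    z * (1 + ε) < z + √(z * (k - z) * ε) + k * ε / 2 := by
  have hkz : 0 < k - z := by linarith
  have hs : 0 < √(z * (k - z) * ε) := sqrt_pos.2 (by positivity)
  have : z * ε ≤ k / 2 * ε := by gcongr; linarith
  linarith

theorem stmt10_general (k ε z t z' : ℝ) (hε0 : 0 < ε)
    (hz : z ∈ Set.Icc 1 (k / 2))
    (ht : t = z + Real.sqrt (z * (k - z) * ε))
    (hz' : z' = t / (1 + ε) + k * ε / (2 * (1 + ε))
      + (1 / (2 * (1 + ε))) * Real.sqrt (k ^ 2 * ε ^ 2 + 4 * ε * t * (k - t))) :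
    z' - z > (Real.sqrt 2 / 2) * (Real.sqrt (k * ε) / (1 + ε)) * Real.sqrt z := by
  obtain ⟨hz1, hzk⟩ := hz
  have hz0 : 0 < z := by linarith
  have hzk' : 2 * z ≤ k := by linarith
  set S := √(k ^ 2 * ε ^ 2 + 4 * ε * t * (k - t))
  have hS : √2 * √(k * ε) * √z ≤ S := by
    subst ht; exact sqrt_two_mul_le_sqrt_radicand hz0.le hzk' hε0.le
  have hlin : z * (1 + ε) < t + k * ε / 2 := ht ▸ mul_one_add_lt_add_sqrt hz0 hzk' hε0
  rw [gt_iff_lt]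
  calc √2 / 2 * (√(k * ε) / (1 + ε)) * √z = √2 * √(k * ε) * √z / (2 * (1 + ε)) := by
        field_simp
    _ < (2 * (t + k * ε / 2 - z * (1 + ε)) + S) / (2 * (1 + ε)) := by gcongr; linarith
    _ = z' - z := by rw [hz']; field_simp; ring

theorem stmt10 (k ε z t z' : ℝ) (hk : 0 < k) (hε0 : 0 < ε) (hε1 : ε < 1)
    (hz : z ∈ Set.Icc 1 (k / 2))
    (ht : t = z + Real.sqrt (z * (k - z) * ε))
    (hz' : z' = t / (1 + ε) + k * ε / (2 * (1 + ε))
      + (1 / (2 * (1 + ε))) * Real.sqrt (k ^ 2 * ε ^ 2 + 4 * ε * t * (k - t))) :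
    z' - z > (Real.sqrt 2 / 2) * (Real.sqrt (k * ε) / (1 + ε)) * Real.sqrt z :=
  stmt10_general k ε z t z' hε0 hz ht hz'
end

section
/- Let ℓ' : [0,k] → ℝ≥0 be concave and piecewise linear with J+1 linear pieces of slopes m₁ > m₂ > ⋯ > m_{J+1} and breakpoints B₁ < ⋯ < B_J in (0,k). Then ℓ' equals the combined gadget function with parameters a_i = (m_i − m_{i+1})/k, b_i = B_i, z₀ = ℓ'(0)/k, z_k = ℓ'(k)/k; that is, for all x ∈ [0,k], ℓ'(x) = z₀(k−x) + z_k x + Σ_{i=1}^J a_i·min{x(k−b_i), (k−x)b_i}. -/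
/-!
Each gadget term is a tent: for `0 ≤ k`, `min (x (k - b)) ((k - x) b) = k min(x, b) - x b`.
On the other hand, integrating the slopes and summing by parts gives the hinge representation
`ℓ' x = ℓ' 0 + m (J+1) x + ∑ (m i - m (i+1)) min(x, B i)`. Substituting the tent identity and
using the hinge representation at `x` and at `k` (to eliminate `∑ (m i - m (i+1)) B i`) proves
the claim.
-/

open Finset

theorem min_mul_sub_mul_eq_mul_min_sub {k : ℝ} (hk : 0 ≤ k) (x b : ℝ) :
    min (x * (k - b)) ((k - x) * b) = k * min x b - x * b := by
  rcases le_total x b with hxb | hbx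
  · rw [min_eq_left (by nlinarith), min_eq_left hxb]
    ring
  · rw [min_eq_right (by nlinarith), min_eq_right hbx]
    ring

theorem sum_Icc_mul_sub_pred_eq (m c : ℕ → ℝ) (n : ℕ) :
    ∑ i ∈ Icc 1 (n + 1), m i * (c i - c (i - 1)) =
      m (n + 1) * c (n + 1) - m 1 * c 0 + ∑ i ∈ Icc 1 n, (m i - m (i + 1)) * c i := by
  induction n with
  | zero =>
    simp only [zero_add, Icc_self, sum_singleton, Nat.sub_self, Icc_eq_empty_of_lt one_pos,
      sum_empty]
    ring
  | succ n ih =>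
    rw [sum_Icc_succ_top (by omega), ih, sum_Icc_succ_top (by omega), Nat.add_sub_cancel]
    ring

/-- `min x (B i) - min x (B (i - 1))` is the length of the part of `[B (i - 1), B i]` left of
`x`, so the sum integrates the slopes of `f` from `B 0` to `x`. -/
theorem eq_add_sum_mul_min_sub_min {B m : ℕ → ℝ} {f : ℝ → ℝ} {N : ℕ}
    (hB : MonotoneOn B (Set.Iic N))
    (hf : ∀ i ∈ Icc 1 N, ∀ x ∈ Set.Icc (B (i - 1)) (B i),
      f x = f (B (i - 1)) + m i * (x - B (i - 1))) :
    ∀ x ∈ Set.Icc (B 0) (B N),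
      f x = f (B 0) + ∑ i ∈ Icc 1 N, m i * (min x (B i) - min x (B (i - 1))) := by
  induction N with
  | zero =>
    intro x hx
    simp [le_antisymm hx.2 hx.1]
  | succ N ih =>
    have hBN : MonotoneOn B (Set.Iic N) :=
      hB.mono (Set.Iic_subset_Iic.mpr N.le_succ)
    have hB' : ∀ {i j : ℕ}, i ≤ j → j ≤ N + 1 → B i ≤ B j := fun hij hj =>
      hB (Set.mem_Iic.mpr (hij.trans hj)) (Set.mem_Iic.mpr hj) hij
    have ihN := ih hBN fun i hi => hf i (by simp only [mem_Icc] at hi ⊢; omega)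
    intro x hx
    rw [sum_Icc_succ_top (by omega), Nat.add_sub_cancel]
    rcases le_total x (B N) with hxN | hNx
    · rw [ihN x ⟨hx.1, hxN⟩, min_eq_left hx.2, min_eq_left hxN]
      ring
    · have hprefix : ∀ i ∈ Icc 1 N, m i * (min x (B i) - min x (B (i - 1))) =
          m i * (min (B N) (B i) - min (B N) (B (i - 1))) := by
        intro i hi
        simp only [mem_Icc] at hi
        have hi' : B i ≤ B N := hB' hi.2 N.le_succ
        have hi'' : B (i - 1) ≤ B N := hB' (by omega) N.le_succ
        rw [min_eq_right (hi'.trans hNx), min_eq_right (hi''.trans hNx), min_eq_right hi',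
          min_eq_right hi'']
      rw [hf (N + 1) (by simp) x (by simpa using ⟨hNx, hx.2⟩), Nat.add_sub_cancel,
        ihN (B N) ⟨hB' (Nat.zero_le N) N.le_succ, le_rfl⟩, sum_congr rfl hprefix,
        min_eq_left hx.2, min_eq_right hNx]
      ring

theorem eq_add_mul_add_sum_mul_min {B m : ℕ → ℝ} {f : ℝ → ℝ} {k : ℝ} {J : ℕ}
    (hB : MonotoneOn B (Set.Iic (J + 1))) (hB0 : B 0 = 0) (hBJ1 : B (J + 1) = k)
    (hf : ∀ i ∈ Icc 1 (J + 1), ∀ x ∈ Set.Icc (B (i - 1)) (B i),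
      f x = f (B (i - 1)) + m i * (x - B (i - 1)))
    {x : ℝ} (hx : x ∈ Set.Icc 0 k) :
    f x = f 0 + m (J + 1) * x + ∑ i ∈ Icc 1 J, (m i - m (i + 1)) * min x (B i) := by
  rw [eq_add_sum_mul_min_sub_min hB hf x (by rwa [hB0, hBJ1]),
    sum_Icc_mul_sub_pred_eq m (fun i => min x (B i)), hB0, hBJ1, min_eq_left hx.2,
    min_eq_right hx.1]
  ring

theorem stmt13_general (k : ℝ) (hk : 0 < k) (J : ℕ)
    (m B : ℕ → ℝ) (ℓ' : ℝ → ℝ)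
    (hB0 : B 0 = 0) (hBJ1 : B (J + 1) = k)
    (hBmono : ∀ i ∈ Finset.Icc 0 J, B i < B (i + 1))
    (hpieces : ∀ i ∈ Finset.Icc 1 (J + 1), ∀ x ∈ Set.Icc (B (i - 1)) (B i),
      ℓ' x = ℓ' (B (i - 1)) + m i * (x - B (i - 1))) :
    ∀ x ∈ Set.Icc (0:ℝ) k,
      ℓ' x = (ℓ' 0 / k) * (k - x) + (ℓ' k / k) * x +
        ∑ i ∈ Finset.Icc 1 J, ((m i - m (i + 1)) / k) * min (x * (k - B i)) ((k - x) * B i) := by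
  intro x hx
  have hB : MonotoneOn B (Set.Iic (J + 1)) :=
    (strictMonoOn_Iic_of_lt_succ fun i hi => hBmono i (by simp; omega)).monotoneOn
  have hBk : ∀ i ∈ Icc 1 J, min k (B i) = B i := fun i hi =>
    min_eq_right (hBJ1 ▸ hB (by simp at hi ⊢; omega) (by simp) (by simp at hi; omega))
  have htents : ∑ i ∈ Icc 1 J, ((m i - m (i + 1)) / k) * min (x * (k - B i)) ((k - x) * B i) =
      ∑ i ∈ Icc 1 J, (m i - m (i + 1)) * min x (B i) -
        x / k * ∑ i ∈ Icc 1 J, (m i - m (i + 1)) * min k (B i) := by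
    rw [mul_sum, ← sum_sub_distrib]
    refine sum_congr rfl fun i hi => ?_
    rw [min_mul_sub_mul_eq_mul_min_sub hk.le, hBk i hi]
    field_simp
  rw [htents, eq_add_mul_add_sum_mul_min hB hB0 hBJ1 hpieces hx,
    eq_add_mul_add_sum_mul_min hB hB0 hBJ1 hpieces ⟨hk.le, le_rfl⟩]
  field_simp
  ring

theorem stmt13 (k : ℝ) (hk : 0 < k) (J : ℕ) (hJ : 0 < J)
    (m B : ℕ → ℝ) (ℓ' : ℝ → ℝ)
    (hB0 : B 0 = 0) (hBJ1 : B (J + 1) = k)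
    (hBmono : ∀ i ∈ Finset.Icc 0 J, B i < B (i + 1))
    (hm : ∀ i ∈ Finset.Icc 1 J, m (i + 1) < m i)
    (hnn : ∀ x ∈ Set.Icc (0:ℝ) k, 0 ≤ ℓ' x)
    (hconc : ConcaveOn ℝ (Set.Icc 0 k) ℓ')
    (hpieces : ∀ i ∈ Finset.Icc 1 (J + 1), ∀ x ∈ Set.Icc (B (i - 1)) (B i),
      ℓ' x = ℓ' (B (i - 1)) + m i * (x - B (i - 1))) :
    ∀ x ∈ Set.Icc (0:ℝ) k,
      ℓ' x = (ℓ' 0 / k) * (k - x) + (ℓ' k / k) * x +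
        ∑ i ∈ Finset.Icc 1 J, ((m i - m (i + 1)) / k) * min (x * (k - B i)) ((k - x) * B i) :=
  stmt13_general k hk J m B ℓ' hB0 hBJ1 hBmono hpieces
end

section
/- Let G be a directed graph with source s, sink t, and node set V ∪ 𝓐 ∪ {s,t}, built as a disjoint union over e ∈ E of gadgets G_e on nodes e ∪ 𝓐_e ∪ {s,t} (the 𝓐_e pairwise disjoint, edges of distinct gadgets sharing only nodes in V ∪ {s,t}). If each gadget satisfies min_{B ⊆ 𝓐_e} cut_{G_e}({s} ∪ B ∪ A) = ℓ_e(|A|) for all A ⊆ e, then the minimum over T ⊆ V ∪ 𝓐 of cut_G({s} ∪ T) restricted to T ∩ V = S equals Σ_{e∈E} ℓ_e(|S ∩ e|), and hence the min s-t cut of G restricted to V minimizes S ↦ Σ_e ℓ_e(|S∩e|). -/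
open Finset

/-- The value of a cut in a weighted directed graph: total weight of edges
leaving the set `X`. -/
def cutVal {N : Type*} [Fintype N] [DecidableEq N] (w : N → N → ℝ) (X : Finset N) : ℝ :=
  ∑ u ∈ X, ∑ v ∈ Xᶜ, w u v

/-- Node of the reduced graph coming from the ground set `V`. -/
def vnode (V ι : Type*) (A : ι → Type*) (v : V) : (V ⊕ ((i : ι) × A i)) ⊕ Bool :=
  Sum.inl (Sum.inl v)

/-- Auxiliary node of the gadget indexed by `i`. -/
def anode (V ι : Type*) (A : ι → Type*) (i : ι) (x : A i) : (V ⊕ ((i : ι) × A i)) ⊕ Bool :=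
  Sum.inl (Sum.inr ⟨i, x⟩)

/-- The source node `s`. -/
def snode (V ι : Type*) (A : ι → Type*) : (V ⊕ ((i : ι) × A i)) ⊕ Bool := Sum.inr true

/-- The sink node `t`. -/
def tnode (V ι : Type*) (A : ι → Type*) : (V ⊕ ((i : ι) × A i)) ⊕ Bool := Sum.inr false

/-- The node set of the gadget for `e i`: the nodes of `e i`, the auxiliary
nodes `A i`, and the source and sink. -/
def gadgetNodes (V ι : Type*) [Fintype V] [DecidableEq V] [Fintype ι] [DecidableEq ι]
    (A : ι → Type*) [∀ i, Fintype (A i)] [∀ i, DecidableEq (A i)]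
    (e : ι → Finset V) (i : ι) : Finset ((V ⊕ ((i : ι) × A i)) ⊕ Bool) :=
  (e i).image (vnode V ι A) ∪ (Finset.univ.image (anode V ι A i)) ∪
    {snode V ι A, tnode V ι A}

/-!
Every edge of a gadget joins two nodes of that gadget, so the cut of an `s`-`t` cut `T` in the
union graph splits as a sum over the gadgets `i` of the cut of `T` in `G_i`, and the `i`-th summand
only sees `T ∩ e i` and `T ∩ 𝓐_i`. The auxiliary node sets are disjoint, hence once `T ∩ V = S`
is fixed they can be chosen independently, and the minimum of the sum is the sum of the gadget
minima `ℓ i |S ∩ e i|`. Comparing a minimum cut with the best cut meeting `V` in any given `S`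
gives the second part.
-/
section Cut

variable {N : Type*} [Fintype N] [DecidableEq N]

lemma cutVal_sum {κ : Type*} [Fintype κ] (w : κ → N → N → ℝ) (X : Finset N) :
    cutVal (fun u v => ∑ i, w i u v) X = ∑ i, cutVal (w i) X := by
  unfold cutVal
  rw [eq_comm, Finset.sum_comm]
  exact Finset.sum_congr rfl fun u _ => Finset.sum_comm

lemma cutVal_eq_sum_ite (w : N → N → ℝ) (X : Finset N) :
    cutVal w X = ∑ u, ∑ v, if u ∈ X ∧ v ∉ X then w u v else 0 := by
  simp [cutVal, ite_and, Finset.sum_ite, Finset.filter_not, Finset.compl_eq_univ_sdiff]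

lemma cutVal_congr_of_support {w : N → N → ℝ} {G X Y : Finset N}
    (hw : ∀ u v, w u v ≠ 0 → u ∈ G ∧ v ∈ G) (h : X ∩ G = Y ∩ G) :
    cutVal w X = cutVal w Y := by
  have hmem : ∀ u ∈ G, u ∈ X ↔ u ∈ Y := fun u hu => by
    simpa [hu] using Finset.ext_iff.1 h u
  rw [cutVal_eq_sum_ite, cutVal_eq_sum_ite]
  refine Finset.sum_congr rfl fun u _ => Finset.sum_congr rfl fun v _ => ?_
  by_cases huv : w u v = 0
  · simp [huv]
  · obtain ⟨hu, hv⟩ := hw u v huv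
    simp only [hmem u hu, hmem v hv]

end Cut

section Gadget

abbrev Node (V ι : Type*) (A : ι → Type*) := (V ⊕ ((i : ι) × A i)) ⊕ Bool

variable {V ι : Type*} {A : ι → Type*} [DecidableEq V] [DecidableEq ι] [∀ i, DecidableEq (A i)]

def gadgetSide (i : ι) (S : Finset V) (B : Finset (A i)) : Finset (Node V ι A) :=
  insert (snode V ι A) (S.image (vnode V ι A) ∪ B.image (anode V ι A i))

def vtrace [Fintype V] (T : Finset (Node V ι A)) : Finset V :=
  univ.filter (fun v => vnode V ι A v ∈ T)

def atrace (i : ι) [Fintype (A i)] (T : Finset (Node V ι A)) : Finset (A i) :=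
  univ.filter (fun x => anode V ι A i x ∈ T)

@[simp]
lemma mem_vtrace [Fintype V] {T : Finset (Node V ι A)} {v : V} :
    v ∈ vtrace T ↔ vnode V ι A v ∈ T := by
  simp [vtrace]

@[simp]
lemma mem_atrace {i : ι} [Fintype (A i)] {T : Finset (Node V ι A)} {x : A i} :
    x ∈ atrace i T ↔ anode V ι A i x ∈ T := by
  simp [atrace]

variable [Fintype V] [Fintype ι] [∀ i, Fintype (A i)]

lemma gadgetSide_subset_gadgetNodes (e : ι → Finset V) {i : ι} {S : Finset V} (hS : S ⊆ e i)
    (B : Finset (A i)) : gadgetSide i S B ⊆ gadgetNodes V ι A e i := by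
  intro n hn
  simp only [gadgetSide, mem_insert, mem_union, mem_image] at hn
  simp only [gadgetNodes, mem_union, mem_image, mem_insert, mem_singleton, mem_univ, true_and]
  rcases hn with rfl | ⟨v, hv, rfl⟩ | ⟨x, _, rfl⟩
  · exact Or.inr (Or.inl rfl)
  · exact Or.inl (Or.inl ⟨v, hS hv, rfl⟩)
  · exact Or.inl (Or.inr ⟨x, rfl⟩)

lemma inter_gadgetNodes_eq_gadgetSide (e : ι → Finset V) {T : Finset (Node V ι A)}
    (hs : snode V ι A ∈ T) (ht : tnode V ι A ∉ T) (i : ι) :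
    T ∩ gadgetNodes V ι A e i = gadgetSide i (vtrace T ∩ e i) (atrace i T) := by
  ext ((v | ⟨j, x⟩) | b)
  · simp [gadgetSide, gadgetNodes, vnode, anode, snode, tnode, and_comm]
  · by_cases hij : i = j
    · subst hij
      simp [gadgetSide, gadgetNodes, vnode, anode, snode, tnode]
    · simp [gadgetSide, gadgetNodes, vnode, anode, snode, tnode, hij]
  · cases b
    · simpa [gadgetSide, gadgetNodes, vnode, anode, snode, tnode] using ht
    · simpa [gadgetSide, gadgetNodes, vnode, anode, snode, tnode] using hs

lemma exists_side_of_traces (S : Finset V) (B : ∀ i, Finset (A i)) :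
    ∃ T : Finset (Node V ι A), snode V ι A ∈ T ∧ tnode V ι A ∉ T ∧
      vtrace T = S ∧ ∀ i, atrace i T = B i := by
  refine ⟨insert (snode V ι A) (S.image (vnode V ι A) ∪
    (univ.sigma B).image (fun p => Sum.inl (Sum.inr p))), mem_insert_self _ _, ?_, ?_, ?_⟩
  · simp [snode, tnode, vnode]
  · ext v
    simp [snode, vnode]
  · intro i
    ext x
    simp [snode, vnode, anode]

end Gadget

section Decomposition

variable {V ι : Type*} [Fintype V] [DecidableEq V] [Fintype ι] [DecidableEq ι]
  {A : ι → Type*} [∀ i, Fintype (A i)] [∀ i, DecidableEq (A i)]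
  {e : ι → Finset V} {w : ι → Node V ι A → Node V ι A → ℝ}

lemma cutVal_eq_sum_gadgetSide
    (hsupp : ∀ i u v, w i u v ≠ 0 → u ∈ gadgetNodes V ι A e i ∧ v ∈ gadgetNodes V ι A e i)
    {T : Finset (Node V ι A)} (hs : snode V ι A ∈ T) (ht : tnode V ι A ∉ T) :
    cutVal (fun u v => ∑ i, w i u v) T =
      ∑ i, cutVal (w i) (gadgetSide i (vtrace T ∩ e i) (atrace i T)) := by
  rw [cutVal_sum]
  refine Finset.sum_congr rfl fun i _ => cutVal_congr_of_support (hsupp i) ?_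
  rw [inter_gadgetNodes_eq_gadgetSide e hs ht i,
    inter_eq_left.2 (gadgetSide_subset_gadgetNodes e inter_subset_right _)]

lemma isLeast_cutVal_vtrace_eq {ℓ : ι → ℕ → ℝ}
    (hsupp : ∀ i u v, w i u v ≠ 0 → u ∈ gadgetNodes V ι A e i ∧ v ∈ gadgetNodes V ι A e i)
    (hgadget : ∀ i : ι, ∀ S ⊆ e i,
      IsLeast {c : ℝ | ∃ B : Finset (A i), c = cutVal (w i) (gadgetSide i S B)}
        (ℓ i S.card))
    (S : Finset V) :
    IsLeast {c : ℝ | ∃ T : Finset (Node V ι A), snode V ι A ∈ T ∧ tnode V ι A ∉ T ∧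
        vtrace T = S ∧ c = cutVal (fun u v => ∑ i, w i u v) T}
      (∑ i, ℓ i ((S ∩ e i).card)) := by
  constructor
  · choose B hB using fun i => (hgadget i (S ∩ e i) inter_subset_right).1
    obtain ⟨T, hs, ht, hS, hB'⟩ := exists_side_of_traces S B
    refine ⟨T, hs, ht, hS, ?_⟩
    rw [cutVal_eq_sum_gadgetSide hsupp hs ht]
    exact Finset.sum_congr rfl fun i _ => by rw [hS, hB' i, hB i]
  · rintro c ⟨T, hs, ht, rfl, rfl⟩
    rw [cutVal_eq_sum_gadgetSide hsupp hs ht]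
    exact Finset.sum_le_sum fun i _ => (hgadget i _ inter_subset_right).2 ⟨_, rfl⟩

end Decomposition

theorem stmt16
    (V ι : Type*) [Fintype V] [DecidableEq V] [Fintype ι] [DecidableEq ι]
    (A : ι → Type*) [∀ i, Fintype (A i)] [∀ i, DecidableEq (A i)]
    (e : ι → Finset V)
    (w : ι → ((V ⊕ ((i : ι) × A i)) ⊕ Bool) → ((V ⊕ ((i : ι) × A i)) ⊕ Bool) → ℝ)
    (ℓ : ι → ℕ → ℝ)
    -- each gadget's edges only involve that gadget's nodes
    (hsupp : ∀ i u v, w i u v ≠ 0 →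
      u ∈ gadgetNodes V ι A e i ∧ v ∈ gadgetNodes V ι A e i)
    -- each gadget models ℓ i : placing `S ⊆ e i` on the source side, the
    -- minimum cut over placements of the auxiliary nodes is ℓ i |S|
    (hgadget : ∀ i : ι, ∀ S ⊆ e i,
      IsLeast {c : ℝ | ∃ B : Finset (A i),
        c = cutVal (w i)
          (insert (snode V ι A) (S.image (vnode V ι A) ∪ B.image (anode V ι A i)))}
        (ℓ i S.card)) :
    -- (1) the minimum s-t cut value among cuts whose source side meets V in S
    --     is ∑ e ℓ_e(|S ∩ e|)
    (∀ S : Finset V,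
      IsLeast {c : ℝ | ∃ T : Finset ((V ⊕ ((i : ι) × A i)) ⊕ Bool),
        snode V ι A ∈ T ∧ tnode V ι A ∉ T ∧
        Finset.univ.filter (fun v : V => vnode V ι A v ∈ T) = S ∧
        c = cutVal (fun u v => ∑ i, w i u v) T}
        (∑ i, ℓ i ((S ∩ e i).card))) ∧
    -- (2) hence the restriction to V of a minimum s-t cut minimizes
    --     S ↦ ∑ e ℓ_e(|S ∩ e|)
    (∀ T : Finset ((V ⊕ ((i : ι) × A i)) ⊕ Bool),
      snode V ι A ∈ T → tnode V ι A ∉ T →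
      (∀ T' : Finset ((V ⊕ ((i : ι) × A i)) ⊕ Bool),
        snode V ι A ∈ T' → tnode V ι A ∉ T' →
        cutVal (fun u v => ∑ i, w i u v) T ≤ cutVal (fun u v => ∑ i, w i u v) T') →
      ∀ S : Finset V,
        ∑ i, ℓ i (((Finset.univ.filter (fun v : V => vnode V ι A v ∈ T)) ∩ e i).card)
          ≤ ∑ i, ℓ i ((S ∩ e i).card)) := by
  have hcut := isLeast_cutVal_vtrace_eq hsupp hgadget
  refine ⟨hcut, fun T hs ht hmin S => ?_⟩
  obtain ⟨T', hs', ht', -, hT'⟩ := (hcut S).1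
  calc ∑ i, ℓ i ((vtrace T ∩ e i).card)
      ≤ cutVal (fun u v => ∑ i, w i u v) T := (hcut (vtrace T)).2 ⟨T, hs, ht, rfl, rfl⟩
    _ ≤ _ := hmin T' hs' ht'
    _ = _ := hT'.symm
end
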